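/- arXiv:2107.12123 — 2 statements merged into one kernel-verified Lean document; each statement's English description precedes it below -/
import Mathlib

section
/- Let χ₁ be an odd Dirichlet character mod n, m prime with gcd(n,m) = 1, and α a nonzero value of the Legendre symbol χ₂ mod m. Then Σ_{1≤a≤nm, χ₂(a)=α} χ₁(a)·a = m·Σ_{k=0}^{n−1} k·Σ_{a=1}^{n} χ₁(a + k·[m]_n)·σ(a,α), where σ(a,α) = #{1 ≤ l ≤ m : χ₂(l) = α and l ≡ a (mod n)} and [m]_n is the least nonnegative residue of m mod n. -/
/-!
Write `a = l + k m` with `1 ≤ l ≤ m` and `k < n`; the condition `χ₂(a) = α` only sees `l`.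
The contribution `Σ_l l · Σ_k χ₁(l + k m)` vanishes, since `k ↦ l + k m` runs over all residues
mod `n` and an odd character is nontrivial. In what is left, `m Σ_k k Σ_l χ₁(l + k m)`, the inner
summand depends on `l` only through `l mod n`, and grouping by that residue gives `σ(a, α)`.
-/

open Finset

theorem sum_Icc_one_mul_eq_sum_range_sum_Icc {M : Type*} [AddCommMonoid M] (f : ℕ → M) (n m : ℕ) :
    ∑ a ∈ Icc 1 (n * m), f a = ∑ k ∈ range n, ∑ l ∈ Icc 1 m, f (l + k * m) := by
  have hIcc : ∀ N : ℕ, Icc 1 N = Ioc 0 N := Icc_add_one_left_eq_Ioc 0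
  simp only [hIcc]
  induction n with
  | zero => simp
  | succ n ih =>
    have hblock : Ioc (n * m) (m + n * m) = (Ioc 0 m).map (addRightEmbedding (n * m)) := by
      rw [map_add_right_Ioc, zero_add]
    rw [sum_range_succ, ← ih, Nat.succ_mul,
      ← sum_Ioc_consecutive f (Nat.zero_le _) (Nat.le_add_right _ _), add_comm (n * m) m,
      hblock, sum_map]
    rfl

namespace ZMod

variable {M : Type*} [AddCommMonoid M] {n : ℕ} [NeZero n]

theorem sum_range_natCast (F : ZMod n → M) : ∑ k ∈ range n, F k = ∑ x, F x :=
  sum_nbij' (↑) val (fun _ _ => mem_univ _) (fun x _ => mem_range.mpr x.val_lt)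
    (fun _ hk => val_natCast_of_lt (mem_range.mp hk)) (fun x _ => natCast_zmod_val x)
    (fun _ _ => rfl)

theorem sum_Icc_one_natCast (F : ZMod n → M) : ∑ a ∈ Icc 1 n, F a = ∑ x, F x := by
  rw [← Ico_add_one_right_eq_Icc, sum_Ico_eq_sum_range, Nat.add_sub_cancel]
  push_cast
  rw [sum_range_natCast (fun x => F (1 + x))]
  exact Equiv.sum_comp (Equiv.addLeft (1 : ZMod n)) F

theorem sum_eq_sum_Icc_one_mul_card_filter_mod {R : Type*} [CommSemiring R] (s : Finset ℕ)
    (g : ZMod n → R) :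
    ∑ l ∈ s, g l = ∑ a ∈ Icc 1 n, g a * #(s.filter (fun l => l % n = a % n)) := by
  have hfiber : ∀ a : ℕ, g a * #(s.filter (fun l => l % n = a % n)) =
      ∑ l ∈ s.filter (fun l : ℕ => (l : ZMod n) = a), g l := by
    intro a
    simp_rw [← natCast_eq_natCast_iff']
    rw [← nsmul_eq_mul', ← sum_const]
    exact sum_congr rfl fun l hl => congrArg g (Eq.symm (mem_filter.mp hl).2)
  simp_rw [hfiber]
  rw [sum_Icc_one_natCast (fun x : ZMod n => ∑ l ∈ s.filter (fun l : ℕ => (l : ZMod n) = x), g l)]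
  exact (sum_fiberwise s (fun l : ℕ => (l : ZMod n)) fun l => g l).symm

end ZMod

theorem MulChar.sum_add_mul_eq_zero {R R' : Type*} [CommRing R] [Fintype R] [CommRing R']
    [IsDomain R'] {χ : MulChar R R'} (hχ : χ ≠ 1) (b : R) {u : R} (hu : IsUnit u) :
    ∑ x, χ (b + x * u) = 0 := by
  have hbij : Function.Bijective (fun x => b + x * u) :=
    (Equiv.addLeft b).bijective.comp (IsUnit.isUnit_iff_mulRight_bijective.mp hu)
  rw [Fintype.sum_bijective _ hbij _ χ fun _ => rfl]
  exact sum_eq_zero_of_ne_one hχ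

theorem DirichletCharacter.Odd.ne_one {R : Type*} [CommRing R] [NeZero (2 : R)] {n : ℕ}
    {χ : DirichletCharacter R n} (hχ : χ.Odd) : χ ≠ 1 := by
  rintro rfl
  exact hχ.not_even _ (MulChar.one_apply isUnit_one.neg)

theorem legendreSym_add_mul_self (p : ℕ) [Fact p.Prime] (a k : ℤ) :
    legendreSym p (a + k * p) = legendreSym p a := by
  rw [legendreSym.mod, Int.add_mul_emod_self_right, ← legendreSym.mod]

theorem sum_range_sum_mul_add_mul {R : Type*} [CommRing R] (c : ℕ → R) (s : Finset ℕ) (n m : ℕ)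
    (hc : ∀ l ∈ s, ∑ k ∈ range n, c (l + k * m) = 0) :
    ∑ k ∈ range n, ∑ l ∈ s, c (l + k * m) * ((l + k * m : ℕ) : R) =
      m * ∑ k ∈ range n, k * ∑ l ∈ s, c (l + k * m) := by
  have hlinear : ∑ k ∈ range n, ∑ l ∈ s, c (l + k * m) * l = 0 := by
    rw [sum_comm]
    exact sum_eq_zero fun l hl => by rw [← sum_mul, hc l hl, zero_mul]
  push_cast
  simp_rw [mul_add, sum_add_distrib, hlinear, zero_add, mul_sum]
  exact sum_congr rfl fun k _ => sum_congr rfl fun l _ => by ring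

theorem gamma_alpha_eq_general (n m : ℕ) (hn : 1 < n) [Fact m.Prime]
    (hnm : Nat.Coprime n m)
    (χ₁ : DirichletCharacter ℂ n) (hodd : χ₁ (-1) = -1)
    (α : ℤ) :
    ∑ a ∈ (Finset.Icc 1 (n * m)).filter (fun (a : ℕ) => legendreSym m a = α),
        χ₁ (a : ZMod n) * (a : ℂ) =
      (m : ℂ) * ∑ k ∈ Finset.range n, (k : ℂ) *
        ∑ a ∈ Finset.Icc 1 n, χ₁ ((a + k * (m % n) : ℕ) : ZMod n) *
          (((Finset.Icc 1 m).filter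
            (fun (l : ℕ) => legendreSym m l = α ∧ l % n = a % n)).card : ℂ) := by
  have : NeZero n := ⟨by omega⟩
  have hχ₁ : χ₁ ≠ 1 := DirichletCharacter.Odd.ne_one hodd
  have hm : IsUnit (m : ZMod n) := (ZMod.isUnit_iff_coprime m n).mpr hnm.symm
  set S := (Icc 1 m).filter (fun l : ℕ => legendreSym m l = α)
  calc _ = ∑ k ∈ range n, ∑ l ∈ S, χ₁ ((l + k * m : ℕ) : ZMod n) * ((l + k * m : ℕ) : ℂ) := by
        rw [sum_filter, sum_Icc_one_mul_eq_sum_range_sum_Icc]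
        simp only [S, sum_filter, Nat.cast_add, Nat.cast_mul, legendreSym_add_mul_self]
    _ = m * ∑ k ∈ range n, k * ∑ l ∈ S, χ₁ ((l + k * m : ℕ) : ZMod n) := by
        refine sum_range_sum_mul_add_mul (fun a => χ₁ a) S n m fun l _ => ?_
        push_cast
        rw [ZMod.sum_range_natCast (fun x : ZMod n => χ₁ (l + x * m))]
        exact MulChar.sum_add_mul_eq_zero hχ₁ _ hm
    _ = _ := by
        refine congrArg _ (sum_congr rfl fun k _ => congrArg _ ?_)
        push_cast
        rw [ZMod.sum_eq_sum_Icc_one_mul_card_filter_mod S (fun x : ZMod n => χ₁ (x + k * m))]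
        refine sum_congr rfl fun a _ => ?_
        rw [ZMod.natCast_mod, filter_filter]

/-- With `χ₁` odd mod `n`, `m` prime coprime to `n`, `χ₂` the Legendre symbol
mod `m`, and `α` a nonzero value of `χ₂`:
`Σ_{1≤a≤nm, χ₂(a)=α} χ₁(a)·a = m·Σ_{k=0}^{n−1} k·Σ_{a=1}^{n} χ₁(a+k[m]_n)·σ(a,α)`,
where `σ(a,α) = #{1 ≤ l ≤ m : χ₂(l) = α, l ≡ a (mod n)}`. -/
theorem gamma_alpha_eq (n m : ℕ) (hn : 1 < n) (hm : m.Prime) [Fact m.Prime]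
    (hnm : Nat.Coprime n m)
    (χ₁ : DirichletCharacter ℂ n) (hodd : χ₁ (-1) = -1)
    (α : ℤ) (hα : α = 1 ∨ α = -1) :
    ∑ a ∈ (Finset.Icc 1 (n * m)).filter (fun (a : ℕ) => legendreSym m a = α),
        χ₁ (a : ZMod n) * (a : ℂ) =
      (m : ℂ) * ∑ k ∈ Finset.range n, (k : ℂ) *
        ∑ a ∈ Finset.Icc 1 n, χ₁ ((a + k * (m % n) : ℕ) : ZMod n) *
          (((Finset.Icc 1 m).filter
            (fun (l : ℕ) => legendreSym m l = α ∧ l % n = a % n)).card : ℂ) :=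
  gamma_alpha_eq_general n m hn hnm χ₁ hodd α
end

section
/- Let q be a prime power, B ∈ F_q[x] of positive degree, and P ∈ F_q[x] irreducible and coprime to B·(B−1). Let a_1(x), …, a_T(x) be the digits (polynomials of degree < deg B) of one period of the (periodic) base-B expansion of 1/P in the field of Laurent series, where T is the period. Then a_1(x) + a_2(x) + ⋯ + a_T(x) = 0 in F_q[x]. -/
/-- The `k`-th digit of the base-`B` expansion of `1/P` in `F_q(x)`:
`a_k = ⌊B^k/P⌋ − B·⌊B^{k−1}/P⌋` (polynomial Euclidean division), a polynomial
of degree `< deg B`. -/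
noncomputable def polyDigit {F : Type*} [Field F] (B P : Polynomial F) (k : ℕ) :
    Polynomial F := B ^ k / P - B * (B ^ (k - 1) / P)

/-!
Write `r_k = B^k mod P`. Euclidean division gives `P a_{k+1} = B r_k − r_{k+1}`, so periodicity
of the digits forces `r_{k+T} − r_k = B^k (r_T − r_0)`; as the left side has degree `< deg P`,
`r_T = r_0`. Summing the identity over a period then telescopes to `P (a_1 + ⋯ + a_T) = (B − 1) Q`
with `Q = r_0 + ⋯ + r_{T−1}`. Since `B − 1` is coprime to `P`, it divides `a_1 + ⋯ + a_T`, which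
has degree `< deg B = deg (B − 1)`, so the sum vanishes.
-/

open Polynomial Finset

section

variable {F : Type*} [Field F] (B P : F[X])

theorem mul_polyDigit_succ (m : ℕ) :
    P * polyDigit B P (m + 1) = B * (B ^ m % P) - B ^ (m + 1) % P := by
  have hm := EuclideanDomain.div_add_mod (B ^ m) P
  have hm' := EuclideanDomain.div_add_mod (B ^ (m + 1)) P
  rw [polyDigit, Nat.add_sub_cancel]
  linear_combination hm' - B * hm

theorem degree_polyDigit_succ_lt {B P : F[X]} (hB : B ≠ 0) (hP : P ≠ 0) (m : ℕ) :
    (polyDigit B P (m + 1)).degree < B.degree := by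
  have hBbot : B.degree ≠ ⊥ := degree_ne_bot.mpr hB
  have hPbot : P.degree ≠ ⊥ := degree_ne_bot.mpr hP
  have hrem (k : ℕ) : (B ^ k % P).degree < P.degree := EuclideanDomain.mod_lt _ hP
  suffices (P * polyDigit B P (m + 1)).degree < P.degree + B.degree by
    rwa [degree_mul, WithBot.add_lt_add_iff_left hPbot] at this
  rw [mul_polyDigit_succ]
  refine (degree_sub_le _ _).trans_lt (max_lt ?_ ?_)
  · rw [degree_mul, add_comm P.degree]
    exact (WithBot.add_lt_add_iff_left hBbot).mpr (hrem m)
  · calc (B ^ (m + 1) % P).degree < P.degree := hrem (m + 1)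
      _ ≤ P.degree + B.degree := le_add_of_nonneg_right (zero_le_degree_iff.mpr hB)

theorem mul_sum_polyDigit (T : ℕ) :
    P * ∑ i ∈ range T, polyDigit B P (i + 1) =
      (B - 1) * ∑ i ∈ range T, B ^ i % P - (B ^ T % P - B ^ 0 % P) := by
  simp only [mul_sum, mul_polyDigit_succ, ← sum_range_sub (fun i ↦ B ^ i % P), ← sum_sub_distrib]
  exact sum_congr rfl fun i _ ↦ by ring

variable {B P} {T : ℕ}

theorem pow_add_mod_sub_pow_mod_of_periodic
    (hper : ∀ k, 1 ≤ k → polyDigit B P (k + T) = polyDigit B P k) (m : ℕ) :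
    B ^ (m + T) % P - B ^ m % P = B ^ m * (B ^ T % P - B ^ 0 % P) := by
  induction m with
  | zero => simp
  | succ m ih =>
    have hstep := mul_polyDigit_succ B P (m + T)
    rw [Nat.add_right_comm, hper (m + 1) m.succ_pos, mul_polyDigit_succ] at hstep
    linear_combination hstep + B * ih

theorem pow_mod_eq_of_periodic (hB : 0 < B.natDegree) (hP : P ≠ 0)
    (hper : ∀ k, 1 ≤ k → polyDigit B P (k + T) = polyDigit B P k) :
    B ^ T % P = B ^ 0 % P := by
  have hB0 : B ≠ 0 := ne_zero_of_natDegree_gt hB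
  have hdiff := pow_add_mod_sub_pow_mod_of_periodic hper P.natDegree
  by_contra hne
  have hc : B ^ T % P - B ^ 0 % P ≠ 0 := sub_ne_zero.mpr hne
  have hrem (k : ℕ) : (B ^ k % P).degree < P.degree := EuclideanDomain.mod_lt _ hP
  have hlt : (B ^ (P.natDegree + T) % P - B ^ P.natDegree % P).degree < P.degree :=
    (degree_sub_le _ _).trans_lt (max_lt (hrem _) (hrem _))
  rw [hdiff] at hlt
  have hge : P.natDegree ≤ (B ^ P.natDegree * (B ^ T % P - B ^ 0 % P)).natDegree := by
    rw [natDegree_mul (pow_ne_zero _ hB0) hc, natDegree_pow]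
    nlinarith
  exact absurd (natDegree_lt_natDegree (mul_ne_zero (pow_ne_zero _ hB0) hc) hlt) (not_lt.mpr hge)

end

theorem sum_polyDigits_eq_zero_general {F : Type*} [Field F]
    (B P : Polynomial F) (hB : 0 < B.natDegree)
    (hcop : IsCoprime P (B * (B - 1)))
    (T : ℕ)
    (hper : ∀ k, 1 ≤ k → polyDigit B P (k + T) = polyDigit B P k) :
    ∑ k ∈ Finset.Icc 1 T, polyDigit B P k = 0 := by
  have hB0 : B ≠ 0 := ne_zero_of_natDegree_gt hB
  have hBsub : (B - 1).degree = B.degree := by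
    rw [← C_1, degree_sub_C (natDegree_pos_iff_degree_pos.mp hB)]
  have hcop' : IsCoprime (B - 1) P := hcop.of_mul_right_right.symm
  have hP : P ≠ 0 := by
    rintro rfl
    have := natDegree_eq_zero_of_isUnit (isCoprime_zero_right.mp hcop')
    rw [← C_1, natDegree_sub_C] at this
    omega
  rw [← Ico_add_one_right_eq_Icc, sum_Ico_eq_sum_range, add_tsub_cancel_right]
  simp only [add_comm 1]
  have hsum := mul_sum_polyDigit B P T
  rw [pow_mod_eq_of_periodic hB hP hper, sub_self, sub_zero] at hsum
  refine eq_zero_of_dvd_of_degree_lt (hcop'.dvd_of_dvd_mul_left ⟨_, hsum⟩) ?_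
  rw [hBsub]
  refine (degree_sum_le _ _).trans_lt ((Finset.sup_lt_iff ?_).mpr fun i _ ↦ ?_)
  · exact bot_lt_iff_ne_bot.mpr (degree_ne_bot.mpr hB0)
  · exact degree_polyDigit_succ_lt hB0 hP i

/-- (Rudnick) If `F` is a finite field, `B` has positive degree, `P` is
irreducible and coprime to `B(B−1)`, and the base-`B` digit sequence of `1/P`
is periodic with period `T`, then the digits over one period sum to `0`. -/
theorem sum_polyDigits_eq_zero {F : Type*} [Field F] [Fintype F]
    (B P : Polynomial F) (hB : 0 < B.natDegree) (hP : Irreducible P)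
    (hcop : IsCoprime P (B * (B - 1)))
    (T : ℕ) (hT : 0 < T)
    (hper : ∀ k, 1 ≤ k → polyDigit B P (k + T) = polyDigit B P k) :
    ∑ k ∈ Finset.Icc 1 T, polyDigit B P k = 0 :=
  sum_polyDigits_eq_zero_general B P hB hcop T hper
end
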